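/- Let l be a prime, G a finite solvable group, and M a faithful simple F_l[G]-module. Let L be a group containing the additive group of M as a normal subgroup with L/M ≅ G, such that the conjugation action of L/M ≅ G on M coincides with the given module structure. Then any two complements H, H' of M in L are conjugate in L: there exists x ∈ L with x H x⁻¹ = H'. -/

import Mathlib

/-!
Two complements of `M` are the images of two splittings `s, s'` of `L → G`, and
`d g := s' g * (s g)⁻¹` is a 1-cocycle with values in `M`; if `d` is the coboundary of `x`,
conjugation by `-x` carries `s` to `s'`. So it suffices that `H¹(G, M) = 0`.

Let `A` be the last nontrivial term of the derived series of `G`; it is abelian and normal, so its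
Sylow `l`-subgroup is normal in `G`. The fixed points of a normal subgroup form a `G`-submodule,
hence are `0` or `M`; for a nontrivial normal subgroup they are `0` by faithfulness, while an
`l`-group acting on the `l`-group `M` fixes a nonzero vector. Hence `l ∤ |A|`. Averaging over `A`
shows that `d` is a coboundary on `A`; after subtracting it, `d` vanishes on `A` and then takes
values in `M^A = 0`.
-/

theorem exists_normal_isMulCommutative_ne_bot {G : Type*} [Group G] [Group.IsSolvable G]
    [Nontrivial G] : ∃ A : Subgroup G, A.Normal ∧ IsMulCommutative A ∧ A ≠ ⊥ := by
  classical
  have hsolv : ∃ n, derivedSeries G n = ⊥ := Group.IsSolvable.solvable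
  have hn : Nat.find hsolv ≠ 0 := fun h0 ↦
    top_ne_bot (derivedSeries_zero G ▸ h0 ▸ Nat.find_spec hsolv)
  refine ⟨derivedSeries G (Nat.find hsolv - 1), derivedSeries_normal G _, ?_,
    Nat.find_min hsolv (by omega)⟩
  rw [← Subgroup.commutator_self_eq_bot_iff, ← derivedSeries_succ,
    Nat.sub_add_cancel (Nat.one_le_iff_ne_zero.2 hn)]
  exact Nat.find_spec hsolv

theorem exists_normal_ne_bot_not_dvd_card {G : Type*} [Group G] [Finite G] [Group.IsSolvable G]
    [Nontrivial G] {p : ℕ} [Fact p.Prime]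
    (h : ∀ A : Subgroup G, A.Normal → IsPGroup p A → A = ⊥) :
    ∃ A : Subgroup G, A.Normal ∧ A ≠ ⊥ ∧ ¬ p ∣ Nat.card A := by
  obtain ⟨A, hAn, hAc, hAne⟩ := exists_normal_isMulCommutative_ne_bot (G := G)
  refine ⟨A, hAn, hAne, fun hdvd ↦ ?_⟩
  obtain ⟨P⟩ : Nonempty (Sylow p A) := inferInstance
  -- `P` is normal in the abelian group `A`, hence characteristic, hence its image is normal in `G`
  have := P.characteristic_of_normal inferInstance
  have hP := h _ inferInstance (P.isPGroup'.map A.subtype)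
  exact P.ne_bot_of_dvd_card hdvd
    ((Subgroup.map_eq_bot_iff_of_injective _ A.subtype_injective).1 hP)

namespace Representation

variable {G V : Type*} [Group G] [AddCommGroup V]

section Cocycles

variable {k : Type*} [CommRing k] [Module k V] (ρ : Representation k G V)

def IsCocycle₁ (d : G → V) : Prop := ∀ g h, d (g * h) = ρ g (d h) + d g

def IsCoboundary₁ (d : G → V) : Prop := ∃ x, ∀ g, ρ g x - x = d g

variable {ρ} {d : G → V}

theorem IsCocycle₁.map_one (hd : IsCocycle₁ ρ d) : d 1 = 0 := by
  simpa using hd 1 1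

theorem IsCocycle₁.sub_coboundary (hd : IsCocycle₁ ρ d) (x : V) :
    IsCocycle₁ ρ (fun g ↦ d g - (ρ g x - x)) := by
  intro g h
  simp only [hd g h, map_mul, Module.End.mul_apply, map_sub]
  abel

theorem IsCocycle₁.comp_subtype (hd : IsCocycle₁ ρ d) (A : Subgroup G) :
    IsCocycle₁ (ρ.comp A.subtype) (d ∘ A.subtype) :=
  fun a b ↦ hd a b

theorem IsCocycle₁.mem_invariants_of_eq_zero {A : Subgroup G} [A.Normal] (hd : IsCocycle₁ ρ d)
    (hA : ∀ a ∈ A, d a = 0) (g : G) : d g ∈ invariants (ρ.comp A.subtype) := by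
  rintro ⟨a, ha⟩
  have hconj : g⁻¹ * a * g ∈ A := by simpa using ‹A.Normal›.conj_mem a ha g⁻¹
  calc ρ a (d g) = d (a * g) := by rw [hd, hA a ha, add_zero]
    _ = d (g * (g⁻¹ * a * g)) := by group
    _ = d g := by rw [hd, hA _ hconj, map_zero, zero_add]

theorem map_invariants_comp_subtype (A : Subgroup G) [A.Normal] (g : G) :
    (invariants (ρ.comp A.subtype)).map (ρ g) = invariants (ρ.comp A.subtype) := by
  have hle (g : G) :
      (invariants (ρ.comp A.subtype)).map (ρ g) ≤ invariants (ρ.comp A.subtype) := by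
    rintro _ ⟨v, hv, rfl⟩ ⟨a, ha⟩
    have hconj : g⁻¹ * a * g ∈ A := by simpa using ‹A.Normal›.conj_mem a ha g⁻¹
    calc ρ a (ρ g v) = ρ g (ρ (g⁻¹ * a * g) v) := by
          simp only [← Module.End.mul_apply, ← map_mul]; group
      _ = ρ g v := congrArg (ρ g) (hv ⟨_, hconj⟩)
  exact le_antisymm (hle g) fun v hv ↦ ⟨ρ g⁻¹ v, hle g⁻¹ ⟨v, hv, rfl⟩, self_inv_apply ρ g v⟩

theorem invariants_comp_subtype_eq_bot (hfaith : Function.Injective ρ)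
    (hsimple : ∀ W : Submodule k V, (∀ g : G, W.map (ρ g) = W) → W = ⊥ ∨ W = ⊤)
    {A : Subgroup G} [A.Normal] (hA : A ≠ ⊥) : invariants (ρ.comp A.subtype) = ⊥ := by
  refine (hsimple _ (map_invariants_comp_subtype A)).resolve_right fun htop ↦ hA ?_
  refine (Subgroup.eq_bot_iff_forall A).2 fun a ha ↦ hfaith ?_
  ext v
  have hv : v ∈ invariants (ρ.comp A.subtype) := htop ▸ Submodule.mem_top
  simpa using hv ⟨a, ha⟩

end Cocycles

section Field

variable {k : Type*} [Field k] [Module k V] {ρ : Representation k G V} {d : G → V}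

theorem IsCocycle₁.isCoboundary₁_of_natCard_ne_zero [Finite G] (hG : (Nat.card G : k) ≠ 0)
    (hd : IsCocycle₁ ρ d) : IsCoboundary₁ ρ d := by
  have := Fintype.ofFinite G
  have hsum (g : G) : ∑ h, d h = ρ g (∑ h, d h) + (Nat.card G : k) • d g := by
    calc ∑ h, d h = ∑ h, d (g * h) := (Fintype.sum_equiv (Equiv.mulLeft g) _ _ fun _ ↦ rfl).symm
      _ = ρ g (∑ h, d h) + (Nat.card G : k) • d g := by
        simp only [hd g, Finset.sum_add_distrib, map_sum, Finset.sum_const, Finset.card_univ,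
          Nat.card_eq_fintype_card, Nat.cast_smul_eq_nsmul]
  refine ⟨-(Nat.card G : k)⁻¹ • ∑ h, d h, fun g ↦ ?_⟩
  rw [map_smul, ← smul_sub, neg_smul, ← smul_neg, neg_sub, sub_eq_of_eq_add' (hsum g),
    inv_smul_smul₀ hG]

theorem IsCocycle₁.isCoboundary₁_of_normal {A : Subgroup G} [A.Normal] [Finite A]
    (hA : (Nat.card A : k) ≠ 0) (hinv : invariants (ρ.comp A.subtype) = ⊥)
    (hd : IsCocycle₁ ρ d) : IsCoboundary₁ ρ d := by
  obtain ⟨x, hx⟩ := (hd.comp_subtype A).isCoboundary₁_of_natCard_ne_zero hA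
  refine ⟨x, fun g ↦ ?_⟩
  have hg := (hd.sub_coboundary x).mem_invariants_of_eq_zero
    (fun a ha ↦ sub_eq_zero.2 (hx ⟨a, ha⟩).symm) g
  rw [hinv, Submodule.mem_bot, sub_eq_zero] at hg
  exact hg.symm

end Field

section PrimeField

variable {p : ℕ} [Fact p.Prime] [Module (ZMod p) V] [Finite V] [Nontrivial V]
  {ρ : Representation (ZMod p) G V}

theorem invariants_ne_bot_of_isPGroup (hG : IsPGroup p G) : invariants ρ ≠ ⊥ := by
  let : MulAction G V := MulAction.compHom V ρ
  have hdvd : p ∣ Nat.card V := by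
    rw [Module.natCard_eq_pow_finrank (K := ZMod p), Nat.card_zmod]
    exact dvd_pow_self p Module.finrank_pos.ne'
  obtain ⟨v, hv, hne⟩ :=
    hG.exists_fixed_point_of_prime_dvd_card_of_fixed_point V hdvd (a := 0) fun g ↦ map_zero (ρ g)
  rw [Submodule.ne_bot_iff]
  exact ⟨v, hv, hne.symm⟩

theorem eq_bot_of_normal_of_isPGroup (hfaith : Function.Injective ρ)
    (hsimple : ∀ W : Submodule (ZMod p) V, (∀ g : G, W.map (ρ g) = W) → W = ⊥ ∨ W = ⊤)
    {A : Subgroup G} [A.Normal] (hA : IsPGroup p A) : A = ⊥ := by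
  by_contra hne
  exact invariants_ne_bot_of_isPGroup hA (invariants_comp_subtype_eq_bot hfaith hsimple hne)

theorem IsCocycle₁.isCoboundary₁_of_faithful_of_simple [Finite G] [Group.IsSolvable G]
    (hfaith : Function.Injective ρ)
    (hsimple : ∀ W : Submodule (ZMod p) V, (∀ g : G, W.map (ρ g) = W) → W = ⊥ ∨ W = ⊤)
    {d : G → V} (hd : IsCocycle₁ ρ d) : IsCoboundary₁ ρ d := by
  rcases subsingleton_or_nontrivial G with hG | hG
  · exact ⟨0, fun g ↦ by rw [Subsingleton.elim g 1, hd.map_one, map_zero, sub_zero]⟩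
  obtain ⟨A, hAn, hAne, hAp⟩ := exists_normal_ne_bot_not_dvd_card (p := p)
    fun A _ hA ↦ eq_bot_of_normal_of_isPGroup hfaith hsimple hA
  exact hd.isCoboundary₁_of_normal (by rwa [Ne, ZMod.natCast_eq_zero_iff])
    (invariants_comp_subtype_eq_bot hfaith hsimple hAne)

end PrimeField

end Representation

section Extension

variable {G M L : Type*} [Group G] [Group L] {ι : M → L}

theorem exists_section_of_isComplement (π : L →* G) (hπ : Function.Surjective π)
    (hker : ∀ x : L, x ∈ π.ker ↔ ∃ m : M, ι m = x) (H : Subgroup L)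
    (hH₁ : ∀ x ∈ H, (∃ m : M, ι m = x) → x = 1) (hH₂ : ∀ x : L, ∃ h ∈ H, ∃ m : M, x = h * ι m) :
    ∃ s : G →* L, (∀ g, π (s g) = g) ∧ s.range = H := by
  have hinj : Function.Injective (π.domRestrict H) :=
    (injective_iff_map_eq_one _).2 fun h hh ↦ Subtype.ext (hH₁ h h.2 ((hker h).1 hh))
  have hsurj : Function.Surjective (π.domRestrict H) := by
    intro g
    obtain ⟨x, rfl⟩ := hπ g
    obtain ⟨h, hh, m, rfl⟩ := hH₂ x
    exact ⟨⟨h, hh⟩, by simp [MonoidHom.mem_ker.1 ((hker (ι m)).2 ⟨m, rfl⟩)]⟩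
  let e := MulEquiv.ofBijective (π.domRestrict H) ⟨hinj, hsurj⟩
  refine ⟨H.subtype.comp e.symm.toMonoidHom, e.apply_symm_apply, ?_⟩
  ext y
  refine ⟨fun ⟨g, hg⟩ ↦ hg ▸ (e.symm g).2, fun hy ↦ ⟨π y, ?_⟩⟩
  exact congrArg Subtype.val (e.symm_apply_apply ⟨y, hy⟩)

variable [AddCommGroup M]

theorem map_neg_of_map_add (hι : ∀ m m', ι (m + m') = ι m * ι m') (m : M) : ι (-m) = (ι m)⁻¹ := by
  have h0 : ι 0 = 1 := by simpa using hι 0 0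
  exact eq_inv_of_mul_eq_one_left (by rw [← hι, neg_add_cancel, h0])

variable {k : Type*} [CommRing k] [Module k M] {ρ : Representation k G M} {π : L →* G}
  {s s' : G →* L}

theorem exists_isCocycle₁_of_sections (hι_inj : Function.Injective ι)
    (hι : ∀ m m', ι (m + m') = ι m * ι m') (hker : ∀ x : L, x ∈ π.ker ↔ ∃ m : M, ι m = x)
    (hconj : ∀ (x : L) (m : M), x * ι m * x⁻¹ = ι (ρ (π x) m))
    (hs : ∀ g, π (s g) = g) (hs' : ∀ g, π (s' g) = g) :
    ∃ d : G → M, ρ.IsCocycle₁ d ∧ ∀ g, ι (d g) = s' g * (s g)⁻¹ := by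
  choose d hd using fun g ↦ (hker (s' g * (s g)⁻¹)).1 (by simp [hs, hs'])
  refine ⟨d, fun g h ↦ hι_inj ?_, hd⟩
  calc ι (d (g * h)) = s' g * (s' h * (s h)⁻¹) * (s' g)⁻¹ * (s' g * (s g)⁻¹) := by
        rw [hd, map_mul, map_mul]; group
    _ = ι (ρ g (d h) + d g) := by rw [← hd, ← hd, hconj, hs', hι]

theorem inv_mul_mul_eq_of_isCoboundary₁ (hι : ∀ m m', ι (m + m') = ι m * ι m')
    (hconj : ∀ (x : L) (m : M), x * ι m * x⁻¹ = ι (ρ (π x) m)) (hs : ∀ g, π (s g) = g)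
    {d : G → M} (hd : ∀ g, ι (d g) = s' g * (s g)⁻¹)
    {x : M} (hx : ∀ g, ρ g x - x = d g) (g : G) : (ι x)⁻¹ * s g * ι x = s' g := by
  calc (ι x)⁻¹ * s g * ι x = ι (-x) * (s g * ι x * (s g)⁻¹) * s g := by
        rw [map_neg_of_map_add hι]; group
    _ = s' g := by rw [hconj, hs, ← hι, neg_add_eq_sub, hx, hd, inv_mul_cancel_right]

end Extension

theorem stmt8 (l : ℕ) [Fact l.Prime] {G : Type*} [Group G] [Finite G] [Group.IsSolvable G]
    {M : Type*} [AddCommGroup M] [Module (ZMod l) M] [FiniteDimensional (ZMod l) M]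
    (ρ : Representation (ZMod l) G M)
    (hfaith : Function.Injective ρ) (hM : Nontrivial M)
    (hsimple : ∀ W : Submodule (ZMod l) M, (∀ g : G, W.map (ρ g) = W) → W = ⊥ ∨ W = ⊤)
    {L : Type*} [Group L] (ι : M → L) (hι_inj : Function.Injective ι)
    (hι_hom : ∀ m m' : M, ι (m + m') = ι m * ι m')
    (π : L →* G) (hπ : Function.Surjective π)
    (hker : ∀ x : L, x ∈ π.ker ↔ ∃ m : M, ι m = x)
    (hconj : ∀ (x : L) (m : M), x * ι m * x⁻¹ = ι (ρ (π x) m))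
    (H H' : Subgroup L)
    (hH₁ : ∀ x ∈ H, (∃ m : M, ι m = x) → x = 1)
    (hH₂ : ∀ x : L, ∃ h ∈ H, ∃ m : M, x = h * ι m)
    (hH'₁ : ∀ x ∈ H', (∃ m : M, ι m = x) → x = 1)
    (hH'₂ : ∀ x : L, ∃ h ∈ H', ∃ m : M, x = h * ι m) :
    ∃ x : L, ∀ y : L, y ∈ H' ↔ ∃ h ∈ H, y = x * h * x⁻¹ := by
  have : Finite M := Module.finite_of_finite (ZMod l)
  obtain ⟨s, hs, rfl⟩ := exists_section_of_isComplement π hπ hker H hH₁ hH₂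
  obtain ⟨s', hs', rfl⟩ := exists_section_of_isComplement π hπ hker H' hH'₁ hH'₂
  obtain ⟨d, hcoc, hd⟩ := exists_isCocycle₁_of_sections hι_inj hι_hom hker hconj hs hs'
  obtain ⟨x, hx⟩ := hcoc.isCoboundary₁_of_faithful_of_simple hfaith hsimple
  have hconj_s := inv_mul_mul_eq_of_isCoboundary₁ hι_hom hconj hs hd hx
  refine ⟨(ι x)⁻¹, fun y ↦ ⟨?_, ?_⟩⟩
  · rintro ⟨g, rfl⟩
    exact ⟨s g, ⟨g, rfl⟩, by rw [inv_inv, hconj_s]⟩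
  · rintro ⟨_, ⟨g, rfl⟩, rfl⟩
    exact ⟨g, by rw [inv_inv, hconj_s]⟩
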